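/- arXiv:1403.2545 — 4 statements merged into one kernel-verified Lean document; each statement's English description precedes it below -/
import Mathlib

section
/- (Theorem 3: conditional equivalence group for m = 1.) Let n ∈ ℝ with n ≠ 0, ε = ±1, e ∈ {1, -1}, let δ₁, δ₂, δ₃ be real constants with δ₁ ≠ 0, δ₃ > 0, let I ⊆ ℝ be an open interval, let T : ℝ → ℝ be smooth with T'(t) ≠ 0 on I, and let f : ℝ → ℝ be nonvanishing on I. Suppose u : ℝ → ℝ → ℝ is smooth, positive on I × ℝ, and satisfies ∂_t u + ε ∂_x u + f(t) ∂_x^3(u^n) = 0 on I × ℝ, and suppose v : ℝ → ℝ → ℝ is smooth with v(T(t), δ₁(x - εt) + e·ε·T(t) + δ₂) = δ₃·u(t, x) for all t ∈ I, x ∈ ℝ. Then for every t ∈ I and x ∈ ℝ, at the point (T(t), δ₁(x - εt) + e·ε·T(t) + δ₂) one has ∂_τ v + (e·ε) ∂_y v + f̃(τ) ∂_y^3(v^n) = 0, where f̃(T(t)) = δ₁³·δ₃^{1-n}·f(t)/T'(t). -/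
/-!
For fixed `t` the change of variables `x ↦ δ₁ (x - ε t) + e ε T t + δ₂` is affine with slope `δ₁`,
so differentiating `v = δ₃ u` and `v ^ n = δ₃ ^ n u ^ n` in `x` gives `δ₁ v_y = δ₃ u_x` and
`δ₁ ^ 3 (v ^ n)_yyy = δ₃ ^ n (u ^ n)_xxx`. Differentiating `v = δ₃ u` in `t` by the chain rule gives
`T' v_τ + (e ε T' - ε δ₁) v_y = δ₃ u_t`; the drift `- ε δ₁ v_y = - ε δ₃ u_x` cancels the transport
term of the equation for `u`, and what remains is the equation for `v` with coefficient
`δ₁ ^ 3 δ₃ ^ (1 - n) f / T'`.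
-/

open Real

noncomputable def pdT (u : ℝ → ℝ → ℝ) (t x : ℝ) : ℝ := deriv (fun s => u s x) t
noncomputable def pdX (u : ℝ → ℝ → ℝ) (t x : ℝ) : ℝ := deriv (fun y => u t y) x
noncomputable def pdX3 (u : ℝ → ℝ → ℝ) (t x : ℝ) : ℝ := deriv (deriv (deriv (fun y => u t y))) x

lemma iteratedDeriv_comp_mul_add {𝕜 : Type*} [NontriviallyNormedField 𝕜] {n : ℕ} {g : 𝕜 → 𝕜}
    (hg : ContDiff 𝕜 n g) (a b x : 𝕜) :
    iteratedDeriv n (fun y => g (a * y + b)) x = a ^ n * iteratedDeriv n g (a * x + b) := by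
  have hgb : ContDiff 𝕜 n (fun z => g (z + b)) := hg.comp (contDiff_id.add contDiff_const)
  rw [iteratedDeriv_comp_const_mul hgb a, iteratedDeriv_comp_add_const]

lemma pow_mul_iteratedDeriv_eq_of_comp_mul_add {𝕜 : Type*} [NontriviallyNormedField 𝕜] {n : ℕ}
    {g h : 𝕜 → 𝕜} (hg : ContDiff 𝕜 n g) {a b c : 𝕜} (hgh : ∀ y, g (a * y + b) = c * h y)
    (x : 𝕜) : a ^ n * iteratedDeriv n g (a * x + b) = c * iteratedDeriv n h x := by
  rw [← iteratedDeriv_comp_mul_add hg, funext hgh, iteratedDeriv_const_mul_field]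

lemma pdX_eq_iteratedDeriv (u : ℝ → ℝ → ℝ) (t x : ℝ) : pdX u t x = iteratedDeriv 1 (u t) x := by
  rw [iteratedDeriv_one]; rfl

lemma pdX3_eq_iteratedDeriv (u : ℝ → ℝ → ℝ) (t x : ℝ) :
    pdX3 u t x = iteratedDeriv 3 (u t) x := by
  rw [iteratedDeriv_eq_iterate]; rfl

section AffineSlice

variable {u v : ℝ → ℝ → ℝ} {τ t a b c : ℝ}

lemma mul_pdX_of_comp_mul_add_eq (hv : ContDiff ℝ 1 (v τ))
    (hvu : ∀ x, v τ (a * x + b) = c * u t x) (x : ℝ) :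
    a * pdX v τ (a * x + b) = c * pdX u t x := by
  simpa only [pdX_eq_iteratedDeriv, pow_one] using
    pow_mul_iteratedDeriv_eq_of_comp_mul_add hv hvu x

lemma pow_mul_pdX3_rpow_of_comp_mul_add_eq (n : ℝ) (ha : a ≠ 0) (hc : 0 < c)
    (hv : ContDiff ℝ 3 (v τ)) (hu : ∀ x, 0 < u t x)
    (hvu : ∀ x, v τ (a * x + b) = c * u t x) (x : ℝ) :
    a ^ 3 * pdX3 (fun τ y => v τ y ^ n) τ (a * x + b)
      = c ^ n * pdX3 (fun t x => u t x ^ n) t x := by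
  have hv_ne : ∀ y, v τ y ≠ 0 := fun y => by
    have hy : a * ((y - b) / a) + b = y := by field_simp; ring
    rw [← hy, hvu]
    exact (mul_pos hc (hu _)).ne'
  have hvu_pow : ∀ x, v τ (a * x + b) ^ n = c ^ n * u t x ^ n := fun x => by
    rw [hvu, mul_rpow hc.le (hu x).le]
  simpa only [pdX3_eq_iteratedDeriv] using
    pow_mul_iteratedDeriv_eq_of_comp_mul_add (hv.rpow_const_of_ne hv_ne) hvu_pow x

end AffineSlice

lemma hasDerivAt_comp_curve {v : ℝ → ℝ → ℝ} {γ η : ℝ → ℝ} {a b t : ℝ}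
    (hv : DifferentiableAt ℝ (Function.uncurry v) (γ t, η t))
    (hγ : HasDerivAt γ a t) (hη : HasDerivAt η b t) :
    HasDerivAt (fun s => v (γ s) (η s)) (a * pdT v (γ t) (η t) + b * pdX v (γ t) (η t)) t := by
  set L := fderiv ℝ (Function.uncurry v) (γ t, η t)
  have hv' : HasFDerivAt (Function.uncurry v) L (γ t, η t) := hv.hasFDerivAt
  have hT : pdT v (γ t) (η t) = L (1, 0) := by
    unfold pdT
    exact (hv'.comp_hasDerivAt (γ t)
      ((hasDerivAt_id (γ t)).prodMk (hasDerivAt_const (γ t) (η t)))).deriv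
  have hX : pdX v (γ t) (η t) = L (0, 1) := by
    unfold pdX
    exact (hv'.comp_hasDerivAt (η t)
      ((hasDerivAt_const (η t) (γ t)).prodMk (hasDerivAt_id (η t)))).deriv
  have hchain := hv'.comp_hasDerivAt t (hγ.prodMk hη)
  have hab : ((a, b) : ℝ × ℝ) = a • (1, 0) + b • (0, 1) := by simp
  rwa [hab, map_add, map_smul, map_smul, smul_eq_mul, smul_eq_mul, ← hT, ← hX] at hchain

lemma pdT_pdX_eq_of_eventually_comp_curve {u v : ℝ → ℝ → ℝ} {γ η : ℝ → ℝ} {a b c t x : ℝ}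
    (hv : DifferentiableAt ℝ (Function.uncurry v) (γ t, η t))
    (hγ : HasDerivAt γ a t) (hη : HasDerivAt η b t)
    (hvu : ∀ᶠ s in nhds t, v (γ s) (η s) = c * u s x) :
    a * pdT v (γ t) (η t) + b * pdX v (γ t) (η t) = c * pdT u t x := by
  rw [← (hasDerivAt_comp_curve hv hγ hη).deriv, Filter.EventuallyEq.deriv_eq hvu]
  exact deriv_const_mul_field c

theorem conditional_equivalence_group_m_eq_one_general
    (n : ℝ) (ε e : ℝ)
    (δ1 δ2 δ3 : ℝ) (hδ1 : δ1 ≠ 0) (hδ3 : 0 < δ3)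
    (I : Set ℝ) (hIopen : IsOpen I)
    (T : ℝ → ℝ) (hT' : ∀ t ∈ I, deriv T t ≠ 0)
    (f ftil : ℝ → ℝ)
    (u : ℝ → ℝ → ℝ) (hupos : ∀ t ∈ I, ∀ x : ℝ, 0 < u t x)
    (hupde : ∀ t ∈ I, ∀ x : ℝ,
      pdT u t x + ε * pdX u t x + f t * pdX3 (fun t x => u t x ^ n) t x = 0)
    (v : ℝ → ℝ → ℝ) (hv : ContDiff ℝ (⊤ : ℕ∞) (Function.uncurry v))
    (hvu : ∀ t ∈ I, ∀ x : ℝ,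
      v (T t) (δ1 * (x - ε * t) + e * ε * T t + δ2) = δ3 * u t x)
    (hftil : ∀ t ∈ I, ftil (T t) = δ1 ^ 3 * δ3 ^ (1 - n) * f t / deriv T t) :
    ∀ t ∈ I, ∀ x : ℝ,
      pdT v (T t) (δ1 * (x - ε * t) + e * ε * T t + δ2)
        + (e * ε) * pdX v (T t) (δ1 * (x - ε * t) + e * ε * T t + δ2)
        + ftil (T t) * pdX3 (fun τ y => v τ y ^ n) (T t)
            (δ1 * (x - ε * t) + e * ε * T t + δ2) = 0 := by
  intro t ht x
  obtain ⟨c, hc⟩ : ∃ c, ∀ x', δ1 * (x' - ε * t) + e * ε * T t + δ2 = δ1 * x' + c :=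
    ⟨e * ε * T t + δ2 - δ1 * ε * t, fun x' => by ring⟩
  have hslice : ∀ x', v (T t) (δ1 * x' + c) = δ3 * u t x' :=
    fun x' => hc x' ▸ hvu t ht x'
  have hv_slice : ContDiff ℝ 3 (v (T t)) :=
    (hv.comp (contDiff_const.prodMk contDiff_id)).of_le (WithTop.coe_le_coe.mpr le_top)
  have hX := mul_pdX_of_comp_mul_add_eq (hv_slice.of_le (by norm_num)) hslice x
  have hX3 := pow_mul_pdX3_rpow_of_comp_mul_add_eq n hδ1 hδ3 hv_slice (hupos t ht) hslice x
  rw [← hc] at hX hX3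
  have hTt : HasDerivAt T (deriv T t) t := (differentiableAt_of_deriv_ne_zero (hT' t ht)).hasDerivAt
  have hη : HasDerivAt (fun s => δ1 * (x - ε * s) + e * ε * T s + δ2)
      (δ1 * -(ε * 1) + e * ε * deriv T t) t :=
    (((((hasDerivAt_id t).const_mul ε).const_sub x).const_mul δ1).add
      (hTt.const_mul (e * ε))).add_const δ2
  have htime := pdT_pdX_eq_of_eventually_comp_curve (u := u) (hv.differentiable (by simp) _) hTt hη
    (Filter.eventually_of_mem (hIopen.mem_nhds ht) fun s hs => hvu s hs x)
  have hK : δ3 ^ (1 - n) * δ3 ^ n = δ3 := by rw [← rpow_add hδ3]; simp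
  have hT0 := hT' t ht
  rw [hftil t ht]
  -- keeps `field_simp` from normalising the evaluation point inside `pdT`, `pdX`, `pdX3`
  set y := δ1 * (x - ε * t) + e * ε * T t + δ2
  field_simp
  linear_combination htime + ε * hX + δ3 ^ (1 - n) * f t * hX3 + δ3 * hupde t ht x
    + f t * pdX3 (fun t x => u t x ^ n) t x * hK

/-- Theorem 3: the conditional equivalence group `G∼_(n,1)` of the subclass
`u_t + ε u_x + f(t)(u^n)_xxx = 0` (the case `m = 1`). -/
theorem conditional_equivalence_group_m_eq_one
    (n : ℝ) (hn : n ≠ 0) (ε e : ℝ) (hε : ε = 1 ∨ ε = -1) (he : e = 1 ∨ e = -1)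
    (δ1 δ2 δ3 : ℝ) (hδ1 : δ1 ≠ 0) (hδ3 : 0 < δ3)
    (I : Set ℝ) (hIopen : IsOpen I) (hIconn : I.OrdConnected)
    (T : ℝ → ℝ) (hT : ContDiff ℝ (⊤ : ℕ∞) T) (hT' : ∀ t ∈ I, deriv T t ≠ 0)
    (f ftil : ℝ → ℝ) (hf : ∀ t ∈ I, f t ≠ 0)
    (u : ℝ → ℝ → ℝ) (hu : ContDiff ℝ (⊤ : ℕ∞) (Function.uncurry u))
    (hupos : ∀ t ∈ I, ∀ x : ℝ, 0 < u t x)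
    (hupde : ∀ t ∈ I, ∀ x : ℝ,
      pdT u t x + ε * pdX u t x + f t * pdX3 (fun t x => u t x ^ n) t x = 0)
    (v : ℝ → ℝ → ℝ) (hv : ContDiff ℝ (⊤ : ℕ∞) (Function.uncurry v))
    (hvu : ∀ t ∈ I, ∀ x : ℝ,
      v (T t) (δ1 * (x - ε * t) + e * ε * T t + δ2) = δ3 * u t x)
    (hftil : ∀ t ∈ I, ftil (T t) = δ1 ^ 3 * δ3 ^ (1 - n) * f t / deriv T t) :
    ∀ t ∈ I, ∀ x : ℝ,
      pdT v (T t) (δ1 * (x - ε * t) + e * ε * T t + δ2)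
        + (e * ε) * pdX v (T t) (δ1 * (x - ε * t) + e * ε * T t + δ2)
        + ftil (T t) * pdX3 (fun τ y => v τ y ^ n) (T t)
            (δ1 * (x - ε * t) + e * ε * T t + δ2) = 0 :=
  conditional_equivalence_group_m_eq_one_general n ε e δ1 δ2 δ3 hδ1 hδ3 I hIopen T hT' f ftil u
    hupos hupde v hv hvu hftil
end

section
/- (Table 1, Case 9: symmetry when f(t) = e^t.) Let m, n ∈ ℝ with n ≠ 0, let ε = ±1, and let s ∈ ℝ. Suppose u : ℝ → ℝ → ℝ is smooth, positive, and satisfies ∂_t u + ε ∂_x(u^m) + e^t ∂_x^3(u^n) = 0 on ℝ × ℝ. Then the function v defined by v(t, x) = e^{s} · u(t - (3m-n-2)s, e^{-(m-1)s} x) is smooth, positive, and satisfies the same equation ∂_t v + ε ∂_x(v^m) + e^t ∂_x^3(v^n) = 0 on ℝ × ℝ. (This is the one-parameter group generated by (3m-n-2) ∂_t + (m-1) x ∂_x + u ∂_u.) -/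
/-!
Under `t ↦ t - a`, `x ↦ c x`, `u ↦ A u` the three terms of the equation pick up the constant
factors `A`, `A ^ m c` and `A ^ n c ^ 3 e ^ a` (the last one because `e ^ t = e ^ a e ^ (t - a)`).
With `A = e ^ s`, `c = e ^ (-(m - 1) s)` and `a = (3m - n - 2) s` all three factors equal `e ^ s`,
so the rescaled function again solves the equation.
-/

open Real

def rescale (A a c : ℝ) (w : ℝ → ℝ → ℝ) (t x : ℝ) : ℝ := A * w (t - a) (c * x)

lemma deriv_const_mul_comp_const_mul (g : ℝ → ℝ) (A c : ℝ) :
    deriv (fun y => A * g (c * y)) = fun y => A * c * deriv g (c * y) := by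
  funext y
  rw [deriv_const_mul_field, deriv_comp_mul_left c g y, smul_eq_mul, mul_assoc]

section Rescale

variable (A a c : ℝ) (w : ℝ → ℝ → ℝ)

lemma pdT_rescale (t x : ℝ) : pdT (rescale A a c w) t x = A * pdT w (t - a) (c * x) := by
  simp only [pdT, rescale]
  rw [deriv_const_mul_field, deriv_comp_sub_const (f := fun τ => w τ (c * x))]

lemma pdX_rescale (t x : ℝ) : pdX (rescale A a c w) t x = A * c * pdX w (t - a) (c * x) := by
  simp only [pdX, rescale]
  rw [deriv_const_mul_comp_const_mul]

lemma pdX3_rescale (t x : ℝ) :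
    pdX3 (rescale A a c w) t x = A * c ^ 3 * pdX3 w (t - a) (c * x) := by
  simp only [pdX3, rescale]
  rw [deriv_const_mul_comp_const_mul, deriv_const_mul_comp_const_mul,
    deriv_const_mul_comp_const_mul]
  ring

lemma contDiff_uncurry_rescale {k : WithTop ℕ∞} (hw : ContDiff ℝ k (Function.uncurry w)) :
    ContDiff ℝ k (Function.uncurry (rescale A a c w)) :=
  contDiff_const.mul (hw.comp ((contDiff_fst.sub contDiff_const).prodMk
    (contDiff_const.mul contDiff_snd)))

lemma rescale_exp_rpow (s : ℝ) (hw : ∀ t x, 0 ≤ w t x) (p : ℝ) :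
    (fun t x => rescale (exp s) a c w t x ^ p)
      = rescale (exp (s * p)) a c (fun t x => w t x ^ p) := by
  funext t x
  rw [rescale, rescale, mul_rpow (exp_pos s).le (hw _ _), exp_mul]

end Rescale

theorem symmetry_f_exponential_general
    (m n : ℝ) (ε : ℝ) (s : ℝ)
    (u : ℝ → ℝ → ℝ) (hu : ContDiff ℝ (⊤ : ℕ∞) (Function.uncurry u))
    (hupos : ∀ t x : ℝ, 0 < u t x)
    (hupde : ∀ t x : ℝ,
      pdT u t x + ε * pdX (fun t x => u t x ^ m) t x
        + Real.exp t * pdX3 (fun t x => u t x ^ n) t x = 0)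
    (v : ℝ → ℝ → ℝ)
    (hv : ∀ t x : ℝ, v t x = Real.exp s
      * u (t - (3 * m - n - 2) * s) (Real.exp (-(m - 1) * s) * x)) :
    ContDiff ℝ (⊤ : ℕ∞) (Function.uncurry v) ∧ (∀ t x : ℝ, 0 < v t x) ∧
      ∀ t x : ℝ,
        pdT v t x + ε * pdX (fun t x => v t x ^ m) t x
          + Real.exp t * pdX3 (fun t x => v t x ^ n) t x = 0 := by
  set a := (3 * m - n - 2) * s with ha
  set c := exp (-(m - 1) * s)
  obtain rfl : v = rescale (exp s) a c u := funext₂ hv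
  refine ⟨contDiff_uncurry_rescale _ _ _ _ hu, fun t x => mul_pos (exp_pos s) (hupos _ _),
    fun t x => ?_⟩
  have hunonneg : ∀ t x, 0 ≤ u t x := fun t x => (hupos t x).le
  rw [rescale_exp_rpow _ _ _ _ hunonneg, rescale_exp_rpow _ _ _ _ hunonneg,
    pdT_rescale, pdX_rescale, pdX3_rescale]
  have hfluxfactor : exp (s * m) * c = exp s := by
    rw [← exp_add]; ring_nf
  have hdispfactor : exp t * (exp (s * n) * c ^ 3) = exp s * exp (t - a) := by
    rw [← exp_nat_mul, ← exp_add, ← exp_add, ← exp_add, ha]; push_cast; ring_nf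
  linear_combination exp s * hupde (t - a) (c * x)
    + ε * pdX (fun t x => u t x ^ m) (t - a) (c * x) * hfluxfactor
    + pdX3 (fun t x => u t x ^ n) (t - a) (c * x) * hdispfactor

/-- Table 1, Case 9: the symmetry generated by
`(3m-n-2)∂_t + (m-1)x∂_x + u∂_u` when `f(t) = e^t`. -/
theorem symmetry_f_exponential
    (m n : ℝ) (hn : n ≠ 0) (ε : ℝ) (hε : ε = 1 ∨ ε = -1) (s : ℝ)
    (u : ℝ → ℝ → ℝ) (hu : ContDiff ℝ (⊤ : ℕ∞) (Function.uncurry u))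
    (hupos : ∀ t x : ℝ, 0 < u t x)
    (hupde : ∀ t x : ℝ,
      pdT u t x + ε * pdX (fun t x => u t x ^ m) t x
        + Real.exp t * pdX3 (fun t x => u t x ^ n) t x = 0)
    (v : ℝ → ℝ → ℝ)
    (hv : ∀ t x : ℝ, v t x = Real.exp s
      * u (t - (3 * m - n - 2) * s) (Real.exp (-(m - 1) * s) * x)) :
    ContDiff ℝ (⊤ : ℕ∞) (Function.uncurry v) ∧ (∀ t x : ℝ, 0 < v t x) ∧
      ∀ t x : ℝ,
        pdT v t x + ε * pdX (fun t x => v t x ^ m) t x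
          + Real.exp t * pdX3 (fun t x => v t x ^ n) t x = 0 :=
  symmetry_f_exponential_general m n ε s u hu hupos hupde v hv
end

section
/- (Table 2, Case 5: Galilean-type symmetry of the variable-coefficient KdV equation.) Let ε = ±1, let f : ℝ → ℝ be an arbitrary nonvanishing function, and let s ∈ ℝ. Suppose u : ℝ → ℝ → ℝ is smooth and satisfies ∂_t u + ε ∂_x(u²) + f(t) ∂_x^3 u = 0 on ℝ × ℝ. Then the function v defined by v(t, x) = u(t, x - 2εs·t) + s is smooth and satisfies the same equation ∂_t v + ε ∂_x(v²) + f(t) ∂_x^3 v = 0 on ℝ × ℝ. (This is the finite form of the symmetry generator 2εt ∂_x + ∂_u, admitted for every f when n = 1, m = 2.) -/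
open Real

/-!
The Galilean boost `v(t, x) = u(t, x - c t) + s` leaves `∂ₓ` and `∂ₓ³` unchanged and turns `∂ₜ`
into `∂ₜ - c ∂ₓ`. Hence `v_t + ε (v²)_x = u_t - c u_x + 2ε (u + s) u_x`, and the choice `c = 2εs`
makes the extra terms `-c u_x + 2εs u_x` cancel, whatever the coefficient `f(t)` of `u_xxx`.
-/

def galileanBoost (c s : ℝ) (u : ℝ → ℝ → ℝ) : ℝ → ℝ → ℝ := fun t x => u t (x - c * t) + s

lemma differentiableAt_of_differentiableAt_uncurry {u : ℝ → ℝ → ℝ} {t x : ℝ}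
    (hu : DifferentiableAt ℝ (Function.uncurry u) (t, x)) : DifferentiableAt ℝ (u t) x :=
  hu.comp x ((differentiableAt_const t).prodMk differentiableAt_id)

lemma pdX_sq {v : ℝ → ℝ → ℝ} {t x : ℝ} (hv : DifferentiableAt ℝ (v t) x) :
    pdX (fun t x => v t x ^ 2) t x = 2 * v t x * pdX v t x := by
  simp only [pdX]
  rw [(hv.hasDerivAt.fun_pow 2).deriv]
  ring

section galileanBoost

variable (c s : ℝ) (u : ℝ → ℝ → ℝ)

lemma contDiff_uncurry_galileanBoost {n : WithTop ℕ∞} (hu : ContDiff ℝ n (Function.uncurry u)) :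
    ContDiff ℝ n (Function.uncurry (galileanBoost c s u)) := by
  have hshear : ContDiff ℝ n fun p : ℝ × ℝ => (p.1, p.2 - c * p.1) :=
    contDiff_fst.prodMk (contDiff_snd.sub (contDiff_const.mul contDiff_fst))
  exact (hu.comp hshear).add contDiff_const

lemma deriv_galileanBoost (t : ℝ) :
    deriv (galileanBoost c s u t) = fun x => deriv (u t) (x - c * t) := by
  funext x
  change deriv (fun x => u t (x - c * t) + s) x = _
  rw [deriv_add_const, deriv_comp_sub_const]

lemma pdX_galileanBoost (t x : ℝ) : pdX (galileanBoost c s u) t x = pdX u t (x - c * t) := by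
  simp only [pdX]
  rw [deriv_galileanBoost]

lemma pdX3_galileanBoost (t x : ℝ) : pdX3 (galileanBoost c s u) t x = pdX3 u t (x - c * t) := by
  simp only [pdX3]
  rw [deriv_galileanBoost]
  have hsecond :
      deriv (fun x => deriv (u t) (x - c * t)) = fun x => deriv (deriv (u t)) (x - c * t) :=
    funext fun x => deriv_comp_sub_const _ _ x
  rw [hsecond, deriv_comp_sub_const]

lemma pdT_galileanBoost {t x : ℝ} (hu : DifferentiableAt ℝ (Function.uncurry u) (t, x - c * t)) :
    pdT (galileanBoost c s u) t x = pdT u t (x - c * t) - c * pdX u t (x - c * t) := by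
  set y := x - c * t
  set F := fderiv ℝ (Function.uncurry u) (t, y)
  have hF : HasFDerivAt (Function.uncurry u) F (t, y) := hu.hasFDerivAt
  have hpdT : HasDerivAt (fun τ => u τ y) (F (1, 0)) t :=
    (hF.comp_hasDerivAt t ((hasDerivAt_id' t).prodMk (hasDerivAt_const t y)) :)
  have hpdX : HasDerivAt (fun x => u t x) (F (0, 1)) y :=
    (hF.comp_hasDerivAt y ((hasDerivAt_const y t).prodMk (hasDerivAt_id' y)) :)
  have hshear : HasDerivAt (fun τ : ℝ => (τ, x - c * τ)) ((1, 0) - c • (0, 1) : ℝ × ℝ) t := by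
    have hdir : ((1, 0) - c • (0, 1) : ℝ × ℝ) = (1, -c) := by ext <;> simp
    rw [hdir]
    exact (hasDerivAt_id' t).prodMk (by simpa using ((hasDerivAt_id' t).const_mul c).const_sub x)
  have hboost : HasDerivAt (fun τ => galileanBoost c s u τ x) (F (1, 0) - c * F (0, 1)) t := by
    have := (hF.comp_hasDerivAt t hshear).add_const s
    rwa [map_sub, map_smul, smul_eq_mul] at this
  rw [pdT, pdT, pdX, hboost.deriv, hpdT.deriv, hpdX.deriv]

end galileanBoost

theorem galilean_symmetry_vcKdV_general
    (ε : ℝ)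
    (f : ℝ → ℝ) (s : ℝ)
    (u : ℝ → ℝ → ℝ) (hu : ContDiff ℝ (⊤ : ℕ∞) (Function.uncurry u))
    (hupde : ∀ t x : ℝ,
      pdT u t x + ε * pdX (fun t x => u t x ^ 2) t x + f t * pdX3 u t x = 0)
    (v : ℝ → ℝ → ℝ) (hv : ∀ t x : ℝ, v t x = u t (x - 2 * ε * s * t) + s) :
    ContDiff ℝ (⊤ : ℕ∞) (Function.uncurry v) ∧
      ∀ t x : ℝ,
        pdT v t x + ε * pdX (fun t x => v t x ^ 2) t x + f t * pdX3 v t x = 0 := by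
  obtain rfl : v = galileanBoost (2 * ε * s) s u := funext fun t => funext (hv t)
  have hv_smooth := contDiff_uncurry_galileanBoost (2 * ε * s) s u hu
  have hu_diff : Differentiable ℝ (Function.uncurry u) := hu.differentiable (by simp)
  have hv_diff : Differentiable ℝ (Function.uncurry (galileanBoost (2 * ε * s) s u)) :=
    hv_smooth.differentiable (by simp)
  refine ⟨hv_smooth, fun t x => ?_⟩
  have hpde := hupde t (x - 2 * ε * s * t)
  rw [pdX_sq (differentiableAt_of_differentiableAt_uncurry (hu_diff _))] at hpde
  rw [pdT_galileanBoost _ _ _ (hu_diff _),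
    pdX_sq (differentiableAt_of_differentiableAt_uncurry (hv_diff _)),
    pdX_galileanBoost, pdX3_galileanBoost]
  simp only [galileanBoost]
  linear_combination hpde

/-- Table 2, Case 5: the Galilean-type symmetry (finite form of `2εt∂_x + ∂_u`)
of the variable-coefficient KdV equation `u_t + ε(u²)_x + f(t)u_xxx = 0`. -/
theorem galilean_symmetry_vcKdV
    (ε : ℝ) (hε : ε = 1 ∨ ε = -1)
    (f : ℝ → ℝ) (hf : ∀ t : ℝ, f t ≠ 0) (s : ℝ)
    (u : ℝ → ℝ → ℝ) (hu : ContDiff ℝ (⊤ : ℕ∞) (Function.uncurry u))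
    (hupde : ∀ t x : ℝ,
      pdT u t x + ε * pdX (fun t x => u t x ^ 2) t x + f t * pdX3 u t x = 0)
    (v : ℝ → ℝ → ℝ) (hv : ∀ t x : ℝ, v t x = u t (x - 2 * ε * s * t) + s) :
    ContDiff ℝ (⊤ : ℕ∞) (Function.uncurry v) ∧
      ∀ t x : ℝ,
        pdT v t x + ε * pdX (fun t x => v t x ^ 2) t x + f t * pdX3 v t x = 0 :=
  galilean_symmetry_vcKdV_general ε f s u hu hupde v hv
end

section
/- (Similarity reduction of u_t + ε(u²)_x + t^{-1} u_xxx = 0.) Let ε = ±1 and a ∈ ℝ, and let φ : ℝ → ℝ be a C³ function satisfying the ODE 3φ'''(ω) + 6ε·φ(ω)·φ'(ω) - a·φ'(ω) - 3·φ(ω) = 0 for all ω ∈ ℝ. Then the function u defined for t > 0, x ∈ ℝ by u(t, x) = (1/t) · φ(x - (a/3)·ln t) satisfies ∂_t u + ε ∂_x(u²) + t^{-1} ∂_x^3 u = 0 for all t > 0, x ∈ ℝ. -/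
open Real

/-!
Along the ansatz `u = t⁻¹ φ(x - b log t)` with `ω = x - b log t`, the chain rule gives
`u_t = -t⁻² (φ + b φ')`, `(u²)_x = 2 t⁻² φ φ'` and `u_xxx = t⁻¹ φ'''`. For `f(t) = t⁻¹` all three
terms of the equation carry the common factor `t⁻²`, and what remains is `1/3` of the reduced
ODE for `b = a/3`.
-/

noncomputable def similarityAnsatz (b : ℝ) (φ : ℝ → ℝ) (t x : ℝ) : ℝ :=
  t⁻¹ * φ (x - b * log t)

section similarityAnsatz

variable {b : ℝ} {φ : ℝ → ℝ} {t : ℝ} (x : ℝ)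

theorem pdT_similarityAnsatz (ht : t ≠ 0) (hφ : DifferentiableAt ℝ φ (x - b * log t)) :
    pdT (similarityAnsatz b φ) t x =
      -(t ^ 2)⁻¹ * (φ (x - b * log t) + b * deriv φ (x - b * log t)) := by
  have hω : HasDerivAt (fun s => x - b * log s) (-(b * t⁻¹)) t :=
    ((hasDerivAt_log ht).const_mul b).const_sub x
  have h := (hasDerivAt_inv ht).fun_mul (hφ.hasDerivAt.comp t hω)
  refine h.deriv.trans ?_
  rw [Function.comp_apply]
  field_simp
  ring

theorem pdX_sq_similarityAnsatz (hφ : DifferentiableAt ℝ φ (x - b * log t)) :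
    pdX (fun t x => similarityAnsatz b φ t x ^ 2) t x =
      2 * (t ^ 2)⁻¹ * φ (x - b * log t) * deriv φ (x - b * log t) := by
  have h := ((hφ.hasDerivAt.comp_sub_const x _).const_mul t⁻¹).fun_pow 2
  rw [pdX, show (fun y => similarityAnsatz b φ t y ^ 2) = fun y => (t⁻¹ * φ (y - b * log t)) ^ 2
    from rfl, h.deriv]
  ring

theorem pdX3_similarityAnsatz :
    pdX3 (similarityAnsatz b φ) t x = t⁻¹ * iteratedDeriv 3 φ (x - b * log t) := by
  change deriv^[3] (fun y => t⁻¹ * φ (y - b * log t)) x = _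
  rw [← iteratedDeriv_eq_iterate]
  exact (iteratedDeriv_const_mul_field _ _).trans
    (congrArg (t⁻¹ * ·) (congrFun (iteratedDeriv_comp_sub_const 3 φ _) x))

end similarityAnsatz

theorem similarity_reduction_t_inverse_general
    (ε : ℝ) (a : ℝ)
    (φ : ℝ → ℝ) (hφ : ContDiff ℝ 3 φ)
    (hode : ∀ ω : ℝ,
      3 * iteratedDeriv 3 φ ω + 6 * ε * φ ω * deriv φ ω
        - a * deriv φ ω - 3 * φ ω = 0)
    (u : ℝ → ℝ → ℝ)
    (hu : ∀ t x : ℝ, u t x = (1 / t) * φ (x - (a / 3) * Real.log t)) :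
    ∀ t x : ℝ, 0 < t →
      pdT u t x + ε * pdX (fun t x => u t x ^ 2) t x + t⁻¹ * pdX3 u t x = 0 := by
  intro t x ht
  have hu' : u = similarityAnsatz (a / 3) φ := by
    funext t x
    rw [hu, one_div, similarityAnsatz]
  have hφd : DifferentiableAt ℝ φ (x - a / 3 * log t) :=
    hφ.differentiable (by norm_num) _
  subst hu'
  rw [pdT_similarityAnsatz x ht.ne' hφd, pdX_sq_similarityAnsatz x hφd, pdX3_similarityAnsatz]
  linear_combination (t ^ 2)⁻¹ / 3 * hode (x - a / 3 * log t)

/-- Similarity reduction of `u_t + ε(u²)_x + t⁻¹ u_xxx = 0` via the ansatz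
`u = (1/t) φ(x - (a/3) ln t)`. -/
theorem similarity_reduction_t_inverse
    (ε : ℝ) (hε : ε = 1 ∨ ε = -1) (a : ℝ)
    (φ : ℝ → ℝ) (hφ : ContDiff ℝ 3 φ)
    (hode : ∀ ω : ℝ,
      3 * iteratedDeriv 3 φ ω + 6 * ε * φ ω * deriv φ ω
        - a * deriv φ ω - 3 * φ ω = 0)
    (u : ℝ → ℝ → ℝ)
    (hu : ∀ t x : ℝ, u t x = (1 / t) * φ (x - (a / 3) * Real.log t)) :
    ∀ t x : ℝ, 0 < t →
      pdT u t x + ε * pdX (fun t x => u t x ^ 2) t x + t⁻¹ * pdX3 u t x = 0 :=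
  similarity_reduction_t_inverse_general ε a φ hφ hode u hu
end
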